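/- arXiv:1110.1623 — 5 statements merged into one kernel-verified Lean document; each statement's English description precedes it below -/
import Mathlib

section
/- Any blow-up of the 3-graph H_7 is F_{3,2}-free, where H_7 is the 3-graph on 7 vertices in which every pair of distinct vertices has codegree exactly 2. -/
/-- `F₃,₂`: the 3-graph on 5 vertices with edges 123, 124, 125, 345. -/
def F32 : Finset (Finset (Fin 5)) := {{0,1,2},{0,1,3},{0,1,4},{2,3,4}}

/-- `H₇`: the union of two edge-disjoint Fano planes on 7 vertices
(0-indexed version of {124,137,156,235,267,346,457,653,647,621,542,517,431,327}). -/
def H7 : Finset (Finset (Fin 7)) :=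
  {{0,1,3},{0,2,6},{0,4,5},{1,2,4},{1,5,6},{2,3,5},{3,4,6},
   {2,4,5},{3,5,6},{0,1,5},{1,3,4},{0,4,6},{0,2,3},{1,2,6}}

/-- The blow-up of the template `H` along the part-assignment `part`:
the edges are the 3-sets whose vertices lie in three distinct parts forming an
edge of `H`. -/
def blowup {V : Type*} [DecidableEq V] {r : ℕ} (part : V → Fin r)
    (H : Finset (Finset (Fin r))) : Set (Finset V) :=
  {e | e.card = 3 ∧ (e.image part).card = 3 ∧ e.image part ∈ H}

/-- `G` (a set of edges) contains a copy of `H` as a subgraph. -/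
def HasCopy {k : ℕ} {V : Type*} [DecidableEq V]
    (H : Finset (Finset (Fin k))) (G : Set (Finset V)) : Prop :=
  ∃ f : Fin k → V, Function.Injective f ∧ ∀ e ∈ H, e.image f ∈ G


/-- In `H₇` every pair of distinct vertices has codegree exactly 2, and any
blow-up of `H₇` is `F₃,₂`-free. -/
theorem blowup_H7_F32_free :
    (∀ x y : Fin 7, x ≠ y →
      (Finset.univ.filter (fun z => ({x, y, z} : Finset (Fin 7)) ∈ H7)).card = 2) ∧
    ∀ (V : Type) [DecidableEq V] (part : V → Fin 7),
      ¬ HasCopy F32 (blowup part H7) := by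
  have codeg : ∀ x y : Fin 7, x ≠ y →
      (Finset.univ.filter (fun z => ({x, y, z} : Finset (Fin 7)) ∈ H7)).card = 2 := by decide
  have card3 : ∀ a b c : Fin 7, ({a,b,c} : Finset (Fin 7)).card = 3 ↔
      (a ≠ b ∧ a ≠ c ∧ b ≠ c) := by decide
  refine ⟨codeg, ?_⟩
  rintro V _ part ⟨f, hf, hcopy⟩
  set p := part ∘ f with hp
  have key : ∀ e ∈ F32, (e.image p).card = 3 ∧ e.image p ∈ H7 := by
    intro e he
    obtain ⟨_, h2, h3⟩ := hcopy e he
    rw [Finset.image_image] at h2 h3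
    exact ⟨h2, h3⟩
  have h012 := key {0,1,2} (by decide)
  have h013 := key {0,1,3} (by decide)
  have h014 := key {0,1,4} (by decide)
  have h234 := key {2,3,4} (by decide)
  simp only [Finset.image_insert, Finset.image_singleton] at h012 h013 h014 h234
  obtain ⟨d01, -, -⟩ := (card3 _ _ _).1 h012.1
  obtain ⟨d23, d24, d34⟩ := (card3 _ _ _).1 h234.1
  set S := Finset.univ.filter (fun z => ({p 0, p 1, z} : Finset (Fin 7)) ∈ H7) with hS
  have m2 : p 2 ∈ S := Finset.mem_filter.2 ⟨Finset.mem_univ _, h012.2⟩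
  have m3 : p 3 ∈ S := Finset.mem_filter.2 ⟨Finset.mem_univ _, h013.2⟩
  have m4 : p 4 ∈ S := Finset.mem_filter.2 ⟨Finset.mem_univ _, h014.2⟩
  have hsub : ({p 2, p 3, p 4} : Finset (Fin 7)) ⊆ S := by
    intro z hz
    simp only [Finset.mem_insert, Finset.mem_singleton] at hz
    rcases hz with rfl | rfl | rfl <;> assumption
  have := Finset.card_le_card hsub
  rw [h234.1, codeg _ _ d01] at this
  omega
end

section
/- Let H_6 be the unique 3-graph on 6 vertices whose every 5-vertex induced subgraph is isomorphic to C_5. Then any blow-up of H_6 is F_{3,2}-free (since C_5 has independent neighbourhoods and a copy of F_{3,2} in a blow-up touches at most 5 distinct parts). -/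
/-- `H₆`: the 3-graph on 6 vertices all of whose 5-vertex induced subgraphs are
isomorphic to `C₅` (0-indexed version of
{123, 234, 345, 145, 125, 136, 356, 256, 246, 146}). -/
def H6 : Finset (Finset (Fin 6)) :=
  {{0,1,2},{1,2,3},{2,3,4},{0,3,4},{0,1,4},{0,2,5},{2,4,5},{1,4,5},{1,3,5},{0,3,5}}

set_option maxRecDepth 10000 in
lemma card3 : ∀ x y z : Fin 6, ({x,y,z} : Finset (Fin 6)).card = 3 → x ≠ y ∧ x ≠ z ∧ y ≠ z := by
  decide

set_option maxRecDepth 100000 in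
lemma pair2 : ∀ a b c d e : Fin 6, c ≠ d → c ≠ e → d ≠ e →
    {a,b,c} ∈ H6 → {a,b,d} ∈ H6 → {a,b,e} ∈ H6 → False := by decide

/-- Any blow-up of `H₆` is `F₃,₂`-free. -/
theorem blowup_H6_F32_free {V : Type*} [DecidableEq V] (part : V → Fin 6) :
    ¬ HasCopy F32 (blowup part H6) := by
  rintro ⟨f, -, hf⟩
  set g := part ∘ f with hg
  have key : ∀ e ∈ F32, (e.image g).card = 3 ∧ e.image g ∈ H6 := by
    intro e he
    obtain ⟨-, h2, h3⟩ := hf e he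
    rw [Finset.image_image] at h2 h3
    exact ⟨h2, h3⟩
  have h1 := key {0,1,2} (by decide)
  have h2 := key {0,1,3} (by decide)
  have h3 := key {0,1,4} (by decide)
  have h4 := key {2,3,4} (by decide)
  simp only [Finset.image_insert, Finset.image_singleton] at h1 h2 h3 h4
  obtain ⟨hcd, hce, hde⟩ := card3 _ _ _ h4.1
  exact pair2 (g 0) (g 1) (g 2) (g 3) (g 4) hcd hce hde h1.2 h2.2 h3.2
end

section
/- Every link graph of the 3-graph H_6 is a 5-cycle, hence triangle-free; consequently any blow-up of H_6 is K_4^--free. -/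
/-- `K₄⁻`: the 3-graph on 4 vertices with 3 edges. -/
def K4minus : Finset (Finset (Fin 4)) := {{0,1,2},{0,1,3},{0,2,3}}

lemma card3_ne (x y z : Fin 6) (h : ({x,y,z} : Finset (Fin 6)).card = 3) :
    x ≠ y ∧ x ≠ z ∧ y ≠ z := by
  revert x y z; decide

lemma no_triangle : ∀ v a b c : Fin 6, a ≠ b → a ≠ c → b ≠ c →
      ¬ (({v,a,b} : Finset (Fin 6)) ∈ H6 ∧ ({v,a,c} : Finset (Fin 6)) ∈ H6 ∧
         ({v,b,c} : Finset (Fin 6)) ∈ H6) := by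
  decide

/-- Every link graph of `H₆` is a 5-cycle, hence triangle-free; consequently
any blow-up of `H₆` is `K₄⁻`-free. -/
theorem H6_links_are_pentagons :
    (∀ v : Fin 6, ∃ f : Fin 5 → Fin 6, Function.Injective f ∧ (∀ i, f i ≠ v) ∧
      ∀ p : Finset (Fin 6),
        (p.card = 2 ∧ v ∉ p ∧ insert v p ∈ H6) ↔ ∃ i : Fin 5, p = {f i, f (i + 1)}) ∧
    (∀ v a b c : Fin 6, a ≠ b → a ≠ c → b ≠ c →
      ¬ (({v,a,b} : Finset (Fin 6)) ∈ H6 ∧ ({v,a,c} : Finset (Fin 6)) ∈ H6 ∧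
         ({v,b,c} : Finset (Fin 6)) ∈ H6)) ∧
    (∀ (V : Type) [DecidableEq V] (part : V → Fin 6),
      ¬ HasCopy K4minus (blowup part H6)) := by
  refine ⟨?_, no_triangle, ?_⟩
  · intro v
    fin_cases v
    · exact ⟨![1,2,5,3,4], by decide⟩
    · exact ⟨![0,2,3,5,4], by decide⟩
    · exact ⟨![0,1,3,4,5], by decide⟩
    · exact ⟨![1,2,4,0,5], by decide⟩
    · exact ⟨![2,3,0,1,5], by decide⟩
    · exact ⟨![0,2,4,1,3], by decide⟩
  · rintro V _ part ⟨f, hf, hcopy⟩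
    have h1 := hcopy {0,1,2} (by decide)
    have h2 := hcopy {0,1,3} (by decide)
    have h3 := hcopy {0,2,3} (by decide)
    simp only [K4minus, blowup, Finset.image_insert, Finset.image_singleton,
      Set.mem_setOf_eq] at h1 h2 h3
    set v := part (f 0); set a := part (f 1); set b := part (f 2); set c := part (f 3)
    obtain ⟨-, hcab, he1⟩ := h1
    obtain ⟨-, hcac, he2⟩ := h2
    obtain ⟨-, hcbc, he3⟩ := h3
    obtain ⟨hva, hvb, hab⟩ := card3_ne v a b hcab
    obtain ⟨-, hvc, hac⟩ := card3_ne v a c hcac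
    obtain ⟨-, -, hbc⟩ := card3_ne v b c hcbc
    exact no_triangle v a b c hab hac hbc ⟨he1, he2, he3⟩
end

section
/- The geometric circle construction has independent neighbourhoods (is F_{3,2}-free): if n points are placed at distinct positions on a circle (no two antipodal, no point at the centre), and a triple is an edge precisely when the centre of the circle lies strictly inside the triangle they determine, then for every pair of vertices x, y, the joint neighbourhood Γ(x,y) spans no edge. -/
open RealInnerProductSpace

lemma key_inner_neg {E : Type*} [NormedAddCommGroup E] [InnerProductSpace ℝ E]
    {x y z : E} (hx : ‖x‖ = 1) (hy : ‖y‖ = 1) (hxy : x ≠ -y)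
    (h : (0 : E) ∈ interior (convexHull ℝ {x, y, z})) :
    ⟪x + y, z⟫ < 0 := by
  set u := x + y with hu_def
  have hu : u ≠ 0 := by
    intro h0
    apply hxy
    have : x + y = 0 := h0
    linear_combination (norm := abel) this
  -- get a point -t • u in the hull
  obtain ⟨ε, hε, hball⟩ := Metric.mem_nhds_iff.mp (mem_interior_iff_mem_nhds.mp h)
  have hun : 0 < ‖u‖ := norm_pos_iff.mpr hu
  set t : ℝ := ε / (2 * ‖u‖) with ht_def
  have ht : 0 < t := by positivity
  have hmem : -(t • u) ∈ convexHull ℝ ({x, y, z} : Set E) := by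
    apply hball
    have h2 : t * ‖u‖ = ε / 2 := by rw [ht_def]; field_simp
    rw [Metric.mem_ball, dist_zero_right, norm_neg, norm_smul, Real.norm_eq_abs,
      abs_of_pos ht]
    linarith
  -- unpack hull membership
  rw [show ({x, y, z} : Set E) = insert x {y, z} from rfl, convexHull_insert ⟨y, by simp⟩] at hmem
  obtain ⟨w, hw, hseg⟩ := Set.mem_iUnion₂.mp hmem
  rw [Set.mem_singleton_iff] at hw
  obtain ⟨v, hv, hseg⟩ := Set.mem_iUnion₂.mp hseg
  rw [convexHull_pair] at hv
  obtain ⟨c, d, hc, hd, hcd, hv⟩ := hv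
  obtain ⟨a, b, ha, hb, hab, hseg⟩ := hseg
  have heq : -(t • u) = a • x + (b*c) • y + (b*d) • z := by
    rw [← hseg, hw, ← hv]; module
  have hinner := congrArg (fun v => ⟪u, v⟫) heq
  simp only [inner_add_right, inner_neg_right, real_inner_smul_right] at hinner
  have huu : 0 < ⟪u, u⟫ := by
    rw [real_inner_self_eq_norm_sq]; exact pow_pos hun 2
  have hxy1 : |⟪x, y⟫| ≤ 1 := by
    have := abs_real_inner_le_norm x y
    rwa [hx, hy, one_mul] at this
  have hux : 0 ≤ ⟪u, x⟫ := by
    rw [hu_def, inner_add_left, real_inner_self_eq_norm_sq, hx]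
    nlinarith [(abs_le.mp hxy1).1, real_inner_comm x y]
  have huy : 0 ≤ ⟪u, y⟫ := by
    rw [hu_def, inner_add_left, real_inner_self_eq_norm_sq, hy]
    nlinarith [(abs_le.mp hxy1).1, real_inner_comm x y]
  nlinarith [mul_nonneg (mul_nonneg hb hd) (le_of_lt huu), mul_nonneg ha hux,
    mul_nonneg (mul_nonneg hb hc) huy, mul_pos ht huu,
    mul_nonneg (mul_nonneg hb hd) hux]

/-- In the geometric circle construction, a triple of points forms an edge iff
the centre of the circle lies strictly inside the triangle they determine. -/
def CircEdge {n : ℕ} (p : Fin n → EuclideanSpace ℝ (Fin 2)) (a b c : Fin n) : Prop :=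
  (0 : EuclideanSpace ℝ (Fin 2)) ∈ interior (convexHull ℝ {p a, p b, p c})

/-- The circle construction has independent neighbourhoods: if `n` points are
placed at distinct, pairwise non-antipodal positions on the unit circle, then
for any two vertices `x, y`, the joint neighbourhood `Γ(x,y)` spans no edge. -/
theorem circle_construction_independent_neighbourhoods
    {n : ℕ} (p : Fin n → EuclideanSpace ℝ (Fin 2))
    (hinj : Function.Injective p)
    (hnorm : ∀ i, ‖p i‖ = 1)
    (hanti : ∀ i j, p i ≠ -p j) :
    ∀ x y z₁ z₂ z₃ : Fin n,
      CircEdge p x y z₁ → CircEdge p x y z₂ → CircEdge p x y z₃ →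
      ¬ CircEdge p z₁ z₂ z₃ := by
  intro x y z₁ z₂ z₃ h1 h2 h3 h
  set u := p x + p y with hu_def
  have k1 : ⟪u, p z₁⟫ < 0 := key_inner_neg (hnorm x) (hnorm y) (hanti x y) h1
  have k2 : ⟪u, p z₂⟫ < 0 := key_inner_neg (hnorm x) (hnorm y) (hanti x y) h2
  have k3 : ⟪u, p z₃⟫ < 0 := key_inner_neg (hnorm x) (hnorm y) (hanti x y) h3
  have hlin : IsLinearMap ℝ (fun v : EuclideanSpace ℝ (Fin 2) => ⟪u, v⟫) :=
    ⟨fun a b => inner_add_right u a b, fun c a => real_inner_smul_right u a c⟩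
  have hconv : Convex ℝ {v : EuclideanSpace ℝ (Fin 2) | ⟪u, v⟫ < 0} :=
    convex_halfSpace_lt hlin 0
  have hsub : convexHull ℝ ({p z₁, p z₂, p z₃} : Set (EuclideanSpace ℝ (Fin 2))) ⊆
      {v | ⟪u, v⟫ < 0} := by
    apply convexHull_min _ hconv
    intro v hv
    rcases hv with rfl | rfl | rfl <;> assumption
  have h0 : (0 : EuclideanSpace ℝ (Fin 2)) ∈ {v : EuclideanSpace ℝ (Fin 2) | ⟪u, v⟫ < 0} :=
    hsub (interior_subset h)
  simp only [Set.mem_setOf_eq, inner_zero_right] at h0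
  exact lt_irrefl _ h0
end

section
/- The iterated blow-up of the 3-edge ([3], {123}) has bipartite link graphs, and hence is K_4^--free. -/
/-- Edges of the iterated blow-up of a single 3-edge `([3], {123})`: `adr v` is
the address of vertex `v` (its part at each level of the iteration). -/
def IterEdge3 {V : Type*} [DecidableEq V] (adr : V → ℕ → Fin 3) (e : Finset V) : Prop :=
  e.card = 3 ∧ ∃ k : ℕ, (∀ j < k, ∀ x ∈ e, ∀ y ∈ e, adr x j = adr y j) ∧
    (e.image (fun v => adr v k)).card = 3

lemma card3_distinct {α : Type*} [DecidableEq α] {x p q : α}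
    (h : ({x, p, q} : Finset α).card = 3) : x ≠ p ∧ x ≠ q ∧ p ≠ q := by
  refine ⟨?_, ?_, ?_⟩ <;> rintro rfl
  · have hsub : ({x, x, q} : Finset α) ⊆ {x, q} := by intro t; simp; try tauto
    have h1 := Finset.card_le_card hsub
    have h2 := Finset.card_insert_le x ({q} : Finset α)
    simp at h2; omega
  · have hsub : ({x, p, x} : Finset α) ⊆ {x, p} := by intro t; simp; try tauto
    have h1 := Finset.card_le_card hsub
    have h2 := Finset.card_insert_le x ({p} : Finset α)
    simp at h2; omega
  · have hsub : ({x, p, p} : Finset α) ⊆ {x, p} := by intro t; simp; try tauto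
    have h1 := Finset.card_le_card hsub
    have h2 := Finset.card_insert_le x ({p} : Finset α)
    simp at h2; omega

lemma fin3_aux : ∀ x p q : Fin 3, x ≠ p → x ≠ q → p ≠ q →
    ((p = x + 1) ↔ ¬(q = x + 1)) := by decide

/-- The iterated blow-up of the 3-edge has bipartite link graphs, and hence is
`K₄⁻`-free. -/
theorem iterated_blowup_edge_bipartite_links {V : Type*} [DecidableEq V]
    (adr : V → ℕ → Fin 3) :
    (∀ v : V, ∃ col : V → Bool, ∀ a b : V,
      IterEdge3 adr ({v, a, b} : Finset V) → col a ≠ col b) ∧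
    ¬ ∃ f : Fin 4 → V, Function.Injective f ∧ ∀ e ∈ K4minus, IterEdge3 adr (e.image f) := by
  classical
  have key : ∀ v : V, ∃ col : V → Bool, ∀ a b : V,
      IterEdge3 adr ({v, a, b} : Finset V) → col a ≠ col b := by
    intro v
    refine ⟨fun a => if h : ∃ j, adr a j ≠ adr v j then
      decide (adr a (Nat.find h) = adr v (Nat.find h) + 1) else false, ?_⟩
    rintro a b ⟨hcard, k, hagree, himg⟩
    have hv : v ∈ ({v, a, b} : Finset V) := by simp
    have ha : a ∈ ({v, a, b} : Finset V) := by simp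
    have hb : b ∈ ({v, a, b} : Finset V) := by simp
    have himg' : ({adr v k, adr a k, adr b k} : Finset (Fin 3)).card = 3 := by
      simpa using himg
    obtain ⟨hva, hvb, hab⟩ := card3_distinct himg'
    have hexa : ∃ j, adr a j ≠ adr v j := ⟨k, fun h => hva h.symm⟩
    have hexb : ∃ j, adr b j ≠ adr v j := ⟨k, fun h => hvb h.symm⟩
    have hfa : Nat.find hexa = k :=
      (Nat.find_eq_iff hexa).2 ⟨fun h => hva h.symm,
        fun j hj => not_not.2 (hagree j hj a ha v hv)⟩
    have hfb : Nat.find hexb = k :=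
      (Nat.find_eq_iff hexb).2 ⟨fun h => hvb h.symm,
        fun j hj => not_not.2 (hagree j hj b hb v hv)⟩
    simp only [dif_pos hexa, dif_pos hexb, hfa, hfb, ne_eq, decide_eq_decide]
    have := fin3_aux (adr v k) (adr a k) (adr b k) hva hvb hab
    tauto
  refine ⟨key, ?_⟩
  rintro ⟨f, hinj, hf⟩
  obtain ⟨col, hcol⟩ := key (f 0)
  have e1 : IterEdge3 adr ({f 0, f 1, f 2} : Finset V) := by
    have := hf {0, 1, 2} (by decide)
    simpa using this
  have e2 : IterEdge3 adr ({f 0, f 1, f 3} : Finset V) := by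
    have := hf {0, 1, 3} (by decide)
    simpa using this
  have e3 : IterEdge3 adr ({f 0, f 2, f 3} : Finset V) := by
    have := hf {0, 2, 3} (by decide)
    simpa using this
  have h12 := hcol (f 1) (f 2) e1
  have h13 := hcol (f 1) (f 3) e2
  have h23 := hcol (f 2) (f 3) e3
  cases hb1 : col (f 1) <;> cases hb2 : col (f 2) <;> cases hb3 : col (f 3) <;> simp_all
end
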